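/- arXiv:2008.03191 — 5 statements merged into one kernel-verified Lean document; each statement's English description precedes it below -/
import Mathlib

section
/- Let q ∈ (3/2, 2) and β ≥ q−1, and define h_β(y) = y^q + (1−y)^q + 2β y^{q/2}(1−y)^{q/2}. Then h_β attains its maximum on [0,1] at y = 1/2, i.e. h_β(y) ≤ h_β(1/2) = (1+β)·2^{1−q} for all y ∈ [0,1]. -/
/-!
Since `h_β = h_{q-1} + 2 (β - (q - 1)) (y (1 - y))^{q/2}` and the last term peaks at `y = 1/2`, it is
enough to treat `β = q - 1`; by the symmetry `y ↦ 1 - y` it is then enough to show that `h_{q-1}` is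
decreasing on `[1/2, 1]`. With `p = q - 1 ∈ [0, 1]`, `a = y` and `b = 1 - y`, its derivative is
`q (a^p - b^p - p (ab)^{(p-1)/2} (a - b))`. Writing `a = e^{c+t}`, `b = e^{c-t}` with `t ≥ 0`, the bracket
is `2 e^{pc} (sinh (p t) - p sinh t) ≤ 0` by convexity of `sinh` on `[0, ∞)`.
-/

open Real Set

namespace Real

theorem convexOn_sinh : ConvexOn ℝ (Ici 0) sinh :=
  convexOn_of_hasDerivWithinAt2_nonneg (convex_Ici 0) continuous_sinh.continuousOn
    (fun x _ => (hasDerivAt_sinh x).hasDerivWithinAt)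
    (fun x _ => (hasDerivAt_cosh x).hasDerivWithinAt)
    (fun x hx => sinh_nonneg_iff.2 (by rw [interior_Ici] at hx; exact le_of_lt hx))

theorem sinh_mul_le_mul_sinh {p t : ℝ} (hp₀ : 0 ≤ p) (hp₁ : p ≤ 1) (ht : 0 ≤ t) :
    sinh (p * t) ≤ p * sinh t := by
  simpa using convexOn_sinh.2 ht self_mem_Ici hp₀ (sub_nonneg.2 hp₁) (by ring)

theorem exp_mul_sub_exp_mul_le {p u v : ℝ} (hp₀ : 0 ≤ p) (hp₁ : p ≤ 1) (hvu : v ≤ u) :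
    exp (p * u) - exp (p * v) ≤ p * exp ((p - 1) * ((u + v) / 2)) * (exp u - exp v) := by
  have key := sinh_mul_le_mul_sinh hp₀ hp₁ (t := (u - v) / 2) (by linarith)
  have exp_add_sub_exp_sub : ∀ c t : ℝ, exp (c + t) - exp (c - t) = 2 * exp c * sinh t := by
    intro c t
    rw [sinh_eq, sub_eq_add_neg c t, exp_add, exp_add]
    ring
  have hL : exp (p * u) - exp (p * v) = 2 * exp (p * ((u + v) / 2)) * sinh (p * ((u - v) / 2)) := by
    rw [← exp_add_sub_exp_sub]; ring_nf
  have hR : exp u - exp v = 2 * exp ((u + v) / 2) * sinh ((u - v) / 2) := by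
    rw [← exp_add_sub_exp_sub]; ring_nf
  have hc : exp ((p - 1) * ((u + v) / 2)) * exp ((u + v) / 2) = exp (p * ((u + v) / 2)) := by
    rw [← exp_add]; ring_nf
  rw [hL, hR]
  calc 2 * exp (p * ((u + v) / 2)) * sinh (p * ((u - v) / 2))
      ≤ 2 * exp (p * ((u + v) / 2)) * (p * sinh ((u - v) / 2)) := by gcongr
    _ = _ := by rw [← hc]; ring

theorem rpow_sub_rpow_le_geom_mean {a b p : ℝ} (hb : 0 < b) (hba : b ≤ a) (hp₀ : 0 ≤ p)
    (hp₁ : p ≤ 1) : a ^ p - b ^ p ≤ p * (a * b) ^ ((p - 1) / 2) * (a - b) := by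
  have ha := hb.trans_le hba
  have key := exp_mul_sub_exp_mul_le hp₀ hp₁ (log_le_log hb hba)
  rw [exp_log ha, exp_log hb] at key
  rw [rpow_def_of_pos ha, rpow_def_of_pos hb, rpow_def_of_pos (mul_pos ha hb), log_mul ha.ne' hb.ne']
  convert key using 3 <;> ring_nf

end Real

/-- The paper's `h_β`, with `y ^ (q/2) * (1 - y) ^ (q/2)` merged into `(y * (1 - y)) ^ (q/2)`:
the two agree on `[0, 1]`, and the merged form differentiates by a single chain rule. -/
noncomputable def hBeta (q β y : ℝ) : ℝ := y ^ q + (1 - y) ^ q + 2 * β * (y * (1 - y)) ^ (q / 2)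

section hBeta

variable {q β y : ℝ}

theorem hBeta_eq_of_mem_Icc (hy : y ∈ Icc (0 : ℝ) 1) :
    y ^ q + (1 - y) ^ q + 2 * β * y ^ (q / 2) * (1 - y) ^ (q / 2) = hBeta q β y := by
  rw [hBeta, mul_rpow hy.1 (sub_nonneg.2 hy.2), mul_assoc (2 * β)]

theorem hBeta_half : hBeta q β (1 / 2) = (1 + β) * 2 ^ (1 - q) := by
  have h : ((1 : ℝ) / 2) ^ q = 2 ^ (-q) := by
    rw [one_div, inv_rpow zero_le_two, rpow_neg zero_le_two]
  rw [hBeta, show (1 : ℝ) - 1 / 2 = 1 / 2 by norm_num, mul_rpow (by norm_num) (by norm_num),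
    ← rpow_add (by norm_num), add_halves, h, sub_eq_add_neg, rpow_add two_pos, rpow_one]
  ring

theorem hBeta_one_sub (y : ℝ) : hBeta q β (1 - y) = hBeta q β y := by
  simp only [hBeta, sub_sub_cancel, mul_comm (1 - y)]
  ring

theorem hBeta_eq_add_hBeta (β γ y : ℝ) :
    hBeta q β y = hBeta q γ y + 2 * (β - γ) * (y * (1 - y)) ^ (q / 2) := by
  simp only [hBeta]
  ring

theorem hasDerivAt_hBeta (hy : y ∈ Ioo (0 : ℝ) 1) :
    HasDerivAt (hBeta q β)
      (q * (y ^ (q - 1) - (1 - y) ^ (q - 1)) + β * q * (y * (1 - y)) ^ (q / 2 - 1) * (1 - 2 * y))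
      y := by
  have hy₀ : y ≠ 0 := hy.1.ne'
  have hy₁ : 1 - y ≠ 0 := (sub_pos.2 hy.2).ne'
  have hsub : HasDerivAt (fun y : ℝ => 1 - y) (-1) y := by
    simpa using (hasDerivAt_id y).const_sub 1
  have h₁ := hasDerivAt_rpow_const (p := q) (Or.inl hy₀)
  have h₂ := (hasDerivAt_rpow_const (p := q) (Or.inl hy₁)).comp y hsub
  have h₃ := ((hasDerivAt_id' y).mul hsub).rpow_const (p := q / 2) (Or.inl (mul_ne_zero hy₀ hy₁))
  refine ((h₁.add h₂).add (h₃.const_mul (2 * β))).congr_deriv ?_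
  simp only [Pi.mul_apply]
  ring

theorem continuous_hBeta (hq : 0 ≤ q) : Continuous (hBeta q β) := by
  have hc := continuous_rpow_const hq
  have hc' := continuous_rpow_const (q := q / 2) (by linarith)
  unfold hBeta
  fun_prop

theorem antitoneOn_hBeta (hq₁ : 1 ≤ q) (hq₂ : q ≤ 2) :
    AntitoneOn (hBeta q (q - 1)) (Icc (1 / 2) 1) := by
  have hIoo : ∀ y ∈ Ioo (1 / 2 : ℝ) 1, y ∈ Ioo (0 : ℝ) 1 := fun y hy =>
    ⟨by linarith [hy.1], hy.2⟩
  refine antitoneOn_of_deriv_nonpos (convex_Icc _ _) (continuous_hBeta (by linarith)).continuousOn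
    ?_ ?_ <;> rw [interior_Icc]
  · exact fun y hy => (hasDerivAt_hBeta (hIoo y hy)).differentiableAt.differentiableWithinAt
  intro y hy
  rw [(hasDerivAt_hBeta (hIoo y hy)).deriv]
  have key := rpow_sub_rpow_le_geom_mean (a := y) (b := 1 - y) (p := q - 1)
    (sub_pos.2 (hIoo y hy).2) (by linarith [hy.1]) (by linarith) (by linarith)
  rw [show (q - 1 - 1) / 2 = q / 2 - 1 by ring] at key
  calc _ = q * ((y ^ (q - 1) - (1 - y) ^ (q - 1))
          - (q - 1) * (y * (1 - y)) ^ (q / 2 - 1) * (y - (1 - y))) := by ring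
    _ ≤ 0 := mul_nonpos_of_nonneg_of_nonpos (by linarith) (by linarith)

theorem hBeta_le_hBeta_half (hq₁ : 1 ≤ q) (hq₂ : q ≤ 2) (hβ : q - 1 ≤ β)
    (hy : y ∈ Icc (0 : ℝ) 1) : hBeta q β y ≤ hBeta q β (1 / 2) := by
  wlog hy' : 1 / 2 ≤ y generalizing y
  · rw [← hBeta_one_sub y]
    exact this ⟨by linarith [hy.2], by linarith [hy.1]⟩ (by linarith)
  have hcrit : hBeta q (q - 1) y ≤ hBeta q (q - 1) (1 / 2) :=
    antitoneOn_hBeta hq₁ hq₂ ⟨le_rfl, by norm_num⟩ ⟨hy', hy.2⟩ hy'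
  have hprod : (y * (1 - y)) ^ (q / 2) ≤ (1 / 2 * (1 - 1 / 2)) ^ (q / 2) :=
    rpow_le_rpow (mul_nonneg hy.1 (sub_nonneg.2 hy.2)) (by nlinarith) (by linarith)
  rw [hBeta_eq_add_hBeta β (q - 1), hBeta_eq_add_hBeta β (q - 1) (1 / 2)]
  exact add_le_add hcrit (mul_le_mul_of_nonneg_left hprod (by linarith))

end hBeta

theorem stmt_6 (q β : ℝ) (hq1 : 3/2 < q) (hq2 : q < 2) (hβ : q - 1 ≤ β) :
    ((1:ℝ)/2) ^ q + (1 - 1/2 : ℝ) ^ q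
        + 2 * β * ((1:ℝ)/2) ^ (q/2) * (1 - 1/2 : ℝ) ^ (q/2)
      = (1 + β) * (2:ℝ) ^ (1 - q) ∧
    ∀ y ∈ Set.Icc (0:ℝ) 1,
      y ^ q + (1 - y) ^ q + 2 * β * y ^ (q/2) * (1 - y) ^ (q/2)
        ≤ (1 + β) * (2:ℝ) ^ (1 - q) := by
  refine ⟨(hBeta_eq_of_mem_Icc ⟨by norm_num, by norm_num⟩).trans hBeta_half, fun y hy => ?_⟩
  rw [hBeta_eq_of_mem_Icc hy, ← hBeta_half]
  exact hBeta_le_hBeta_half (by linarith) hq2.le hβ hy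
end

section
/- Let q ∈ (2,3) and 0 < β ≤ q−1. Then h_β(y) = y^q + (1−y)^q + 2β y^{q/2}(1−y)^{q/2} ≤ 1 for all y ∈ [0,1], with equality only at y = 0 and y = 1. -/
open Real

/-- Concavity gradient inequality for `x ^ s`, `0 ≤ s ≤ 1`. -/
lemma bern_aux {a B s : ℝ} (hB : 0 < B) (hBa : B ≤ a) (hs0 : 0 ≤ s) (hs1 : s ≤ 1) :
    s * a ^ (s - 1) * (a - B) ≤ a ^ s - B ^ s := by
  have ha : 0 < a := hB.trans_le hBa
  have h1 : (B / a) ^ s ≤ 1 + s * (B / a - 1) := by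
    have h := rpow_one_add_le_one_add_mul_self (s := B / a - 1)
      (by have : 0 < B / a := div_pos hB ha; linarith) hs0 hs1
    simpa using h
  have h2 : B ^ s = a ^ s * (B / a) ^ s := by
    rw [← Real.mul_rpow ha.le (by positivity)]
    congr 1
    field_simp
  have hap : 0 < a ^ s := rpow_pos_of_pos ha s
  have key : B ^ s ≤ a ^ s * (1 + s * (B / a - 1)) := by
    rw [h2]; exact mul_le_mul_of_nonneg_left h1 hap.le
  have h3 : a ^ (s - 1) = a ^ s / a := by rw [Real.rpow_sub_one ha.ne']
  have hid : s * (a ^ s / a) * (a - B) = a ^ s - a ^ s * (1 + s * (B / a - 1)) := by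
    field_simp; ring
  rw [h3, hid]
  linarith

/-- Trapezoid-type inequality for `x ^ p`, `1 ≤ p ≤ 2`. -/
lemma key_aux {p A B : ℝ} (hp1 : 1 ≤ p) (hp2 : p ≤ 2) (hB : 0 < B) (hBA : B ≤ A) :
    p * (A - B) * (A ^ (p - 1) + B ^ (p - 1)) ≤ 2 * (A ^ p - B ^ p) := by
  set F : ℝ → ℝ := fun a => 2 * (a ^ p - B ^ p) - p * ((a - B) * (a ^ (p - 1) + B ^ (p - 1)))
    with hF
  have hderiv : ∀ a ∈ Set.Ioi B, HasDerivAt F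
      (2 * (p * a ^ (p - 1)) -
        p * (1 * (a ^ (p - 1) + B ^ (p - 1)) + (a - B) * ((p - 1) * a ^ (p - 1 - 1)))) a := by
    intro a ha
    have ha0 : (0:ℝ) < a := hB.trans ha
    have h1 : HasDerivAt (fun x : ℝ => x ^ p) (p * a ^ (p - 1)) a :=
      Real.hasDerivAt_rpow_const (Or.inl ha0.ne')
    have h2 : HasDerivAt (fun x : ℝ => x ^ (p - 1)) ((p - 1) * a ^ (p - 1 - 1)) a :=
      Real.hasDerivAt_rpow_const (Or.inl ha0.ne')
    have h3 : HasDerivAt (fun x : ℝ => x - B) 1 a := (hasDerivAt_id a).sub_const B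
    exact ((h1.sub_const _).const_mul 2).sub ((h3.mul (h2.add_const _)).const_mul p)
  have hmono : MonotoneOn F (Set.Ici B) := by
    apply monotoneOn_of_deriv_nonneg (convex_Ici B)
    · have c1 : Continuous fun a : ℝ => a ^ p := continuous_rpow_const (by linarith)
      have c2 : Continuous fun a : ℝ => a ^ (p - 1) := continuous_rpow_const (by linarith)
      exact ((continuous_const.mul (c1.sub continuous_const)).sub
        (continuous_const.mul ((continuous_id.sub continuous_const).mul
          (c2.add continuous_const)))).continuousOn
    · rw [interior_Ici]
      exact fun a ha => (hderiv a ha).differentiableAt.differentiableWithinAt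
    · rw [interior_Ici]
      intro a ha
      rw [(hderiv a ha).deriv]
      have ha0 : (0:ℝ) < a := hB.trans ha
      have hb := bern_aux hB (le_of_lt ha) (by linarith : (0:ℝ) ≤ p - 1) (by linarith)
      nlinarith [hb, hp1]
  have hFB : F B = 0 := by simp [hF]
  have := hmono (Set.self_mem_Ici) hBA hBA
  rw [hFB] at this
  simp only [hF] at this
  linarith

/-- Strict AM-GM for the geometric middle term. -/
lemma amgm_aux {A B c : ℝ} (hB : 0 < B) (hBA : B < A) (hc : 0 < c) :
    (A * B) ^ c < (A ^ (2 * c) + B ^ (2 * c)) / 2 := by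
  have hA : 0 < A := hB.trans hBA
  have hu : (A * B) ^ c = A ^ c * B ^ c := Real.mul_rpow hA.le hB.le
  have hA2 : A ^ (2 * c) = (A ^ c) ^ 2 := by
    rw [← Real.rpow_natCast (A ^ c) 2, ← Real.rpow_mul hA.le]
    norm_num [mul_comm]
  have hB2 : B ^ (2 * c) = (B ^ c) ^ 2 := by
    rw [← Real.rpow_natCast (B ^ c) 2, ← Real.rpow_mul hB.le]
    norm_num [mul_comm]
  have hne : B ^ c < A ^ c := Real.rpow_lt_rpow hB.le hBA hc
  rw [hu, hA2, hB2]
  nlinarith [sq_nonneg (A ^ c - B ^ c)]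

/-- The comparison function is strictly monotone on `[0,1]`. -/
lemma gmono {q : ℝ} (hq1 : 2 < q) (hq2 : q < 3) :
    StrictMonoOn (fun x : ℝ => (1 + x) ^ q + (1 - x) ^ q + 2 * (q - 1) * (1 - x ^ 2) ^ (q / 2))
      (Set.Icc 0 1) := by
  apply strictMonoOn_of_deriv_pos (convex_Icc 0 1)
  · have cq : Continuous fun t : ℝ => t ^ q := continuous_rpow_const (by linarith)
    have cq2 : Continuous fun t : ℝ => t ^ (q / 2) := continuous_rpow_const (by linarith)
    exact (((cq.comp (by continuity)).add (cq.comp (by continuity))).add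
      (continuous_const.mul (cq2.comp (by continuity)))).continuousOn
  · rw [interior_Icc]
    rintro x ⟨hx0, hx1⟩
    have hA : (0:ℝ) < 1 + x := by linarith
    have hB : (0:ℝ) < 1 - x := by linarith
    have hAB : (0:ℝ) < 1 - x ^ 2 := by nlinarith
    have d1 : HasDerivAt (fun x : ℝ => (1 + x) ^ q) (1 * q * (1 + x) ^ (q - 1)) x :=
      (HasDerivAt.const_add 1 (hasDerivAt_id x)).rpow_const (Or.inl hA.ne')
    have d2 : HasDerivAt (fun x : ℝ => (1 - x) ^ q) ((-1) * q * (1 - x) ^ (q - 1)) x :=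
      ((hasDerivAt_id x).const_sub 1).rpow_const (Or.inl hB.ne')
    have d3 : HasDerivAt (fun x : ℝ => (1 - x ^ 2) ^ (q / 2))
        ((-(2 * x)) * (q / 2) * (1 - x ^ 2) ^ (q / 2 - 1)) x := by
      have : HasDerivAt (fun x : ℝ => 1 - x ^ 2) (-(2 * x)) x := by
        simpa using ((hasDerivAt_pow 2 x).const_sub 1)
      exact this.rpow_const (Or.inl hAB.ne')
    have hg : HasDerivAt
        (fun x : ℝ => (1 + x) ^ q + (1 - x) ^ q + 2 * (q - 1) * (1 - x ^ 2) ^ (q / 2))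
        (1 * q * (1 + x) ^ (q - 1) + (-1) * q * (1 - x) ^ (q - 1) +
          2 * (q - 1) * ((-(2 * x)) * (q / 2) * (1 - x ^ 2) ^ (q / 2 - 1))) x :=
      (d1.add d2).add (d3.const_mul _)
    rw [hg.deriv]
    -- Show positivity of the derivative
    have hfac : (1:ℝ) - x ^ 2 = (1 + x) * (1 - x) := by ring
    have hexp : q / 2 - 1 = 2⁻¹ * (q - 1 - 1) := by ring
    have hc : (0:ℝ) < 2⁻¹ * (q - 1 - 1) := by norm_num; linarith
    have hgm : ((1 + x) * (1 - x)) ^ (2⁻¹ * (q - 1 - 1)) <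
        ((1 + x) ^ (2 * (2⁻¹ * (q - 1 - 1))) + (1 - x) ^ (2 * (2⁻¹ * (q - 1 - 1)))) / 2 :=
      amgm_aux hB (by linarith) hc
    have h2c : 2 * (2⁻¹ * (q - 1 - 1)) = q - 1 - 1 := by ring
    rw [h2c] at hgm
    have hkey : (q - 1) * ((1 + x) - (1 - x)) * ((1 + x) ^ (q - 1 - 1) + (1 - x) ^ (q - 1 - 1)) ≤
        2 * ((1 + x) ^ (q - 1) - (1 - x) ^ (q - 1)) :=
      key_aux (by linarith) (by linarith) hB (by linarith)
    rw [hfac, hexp]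
    have hq0 : (0:ℝ) < q := by linarith
    have hS : (0:ℝ) ≤ (1 + x) ^ (q - 1 - 1) + (1 - x) ^ (q - 1 - 1) := by positivity
    nlinarith [hgm, hkey, mul_pos hx0 hq0, rpow_pos_of_pos hA (q-1), rpow_pos_of_pos hB (q-1),
      mul_pos (mul_pos hx0 hq0) (by linarith : (0:ℝ) < q - 1)]

/-- Interior strict bound for the extremal `β = q - 1`, in the half `y ≥ 1/2`. -/
lemma interior_lt {q : ℝ} (hq1 : 2 < q) (hq2 : q < 3) {y : ℝ} (hy0 : 0 < y) (hy1 : y < 1)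
    (hy2 : 1 / 2 ≤ y) :
    y ^ q + (1 - y) ^ q + 2 * (q - 1) * y ^ (q / 2) * (1 - y) ^ (q / 2) < 1 := by
  set x := 2 * y - 1 with hxdef
  have hx0 : 0 ≤ x := by simp [hxdef]; linarith
  have hx1 : x < 1 := by simp [hxdef]; linarith
  have h1y : (0:ℝ) < 1 - y := by linarith
  have h2q : (0:ℝ) < (2:ℝ) ^ q := rpow_pos_of_pos two_pos q
  have e1 : (1 + x) ^ q = 2 ^ q * y ^ q := by
    have : (1:ℝ) + x = 2 * y := by rw [hxdef]; ring
    rw [this, Real.mul_rpow (by norm_num) hy0.le]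
  have e2 : (1 - x) ^ q = 2 ^ q * (1 - y) ^ q := by
    have : (1:ℝ) - x = 2 * (1 - y) := by rw [hxdef]; ring
    rw [this, Real.mul_rpow (by norm_num) h1y.le]
  have e3 : (1 - x ^ 2) ^ (q / 2) = 2 ^ q * (y ^ (q / 2) * (1 - y) ^ (q / 2)) := by
    have h : (1:ℝ) - x ^ 2 = (2 * y) * (2 * (1 - y)) := by rw [hxdef]; ring
    rw [h, Real.mul_rpow (by positivity) (by positivity),
      Real.mul_rpow (by norm_num) hy0.le, Real.mul_rpow (by norm_num) h1y.le]
    have h22 : (2:ℝ) ^ (q / 2) * 2 ^ (q / 2) = 2 ^ q := by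
      rw [← Real.rpow_add two_pos]; norm_num
    calc 2 ^ (q / 2) * y ^ (q / 2) * (2 ^ (q / 2) * (1 - y) ^ (q / 2))
        = (2 ^ (q / 2) * 2 ^ (q / 2)) * (y ^ (q / 2) * (1 - y) ^ (q / 2)) := by ring
      _ = 2 ^ q * (y ^ (q / 2) * (1 - y) ^ (q / 2)) := by rw [h22]
  have hg1 : (1 + (1:ℝ)) ^ q + (1 - 1) ^ q + 2 * (q - 1) * (1 - (1:ℝ) ^ 2) ^ (q / 2) = 2 ^ q := by
    rw [show (1:ℝ) - 1 = 0 from by norm_num, show (1:ℝ) - 1 ^ 2 = 0 from by norm_num,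
      Real.zero_rpow (ne_of_gt (by linarith)), Real.zero_rpow (ne_of_gt (by linarith))]
    norm_num
  have hlt := gmono hq1 hq2 (Set.mem_Icc.mpr ⟨hx0, hx1.le⟩)
    (Set.mem_Icc.mpr ⟨zero_le_one, le_refl 1⟩) hx1
  simp only [] at hlt
  rw [hg1, e1, e2, e3] at hlt
  nlinarith [hlt, h2q]

theorem stmt_8 (q β : ℝ) (hq1 : 2 < q) (hq2 : q < 3) (hβ1 : 0 < β) (hβ2 : β ≤ q - 1) :
    ∀ y ∈ Set.Icc (0:ℝ) 1,
      y ^ q + (1 - y) ^ q + 2 * β * y ^ (q/2) * (1 - y) ^ (q/2) ≤ 1 ∧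
      (y ^ q + (1 - y) ^ q + 2 * β * y ^ (q/2) * (1 - y) ^ (q/2) = 1 ↔ y = 0 ∨ y = 1) := by
  rintro y ⟨hy0, hy1⟩
  have hqne : q ≠ 0 := ne_of_gt (by linarith)
  have hq2ne : q / 2 ≠ 0 := ne_of_gt (by linarith)
  rcases eq_or_lt_of_le hy0 with rfl | hy0'
  · have : (0:ℝ) ^ q + (1 - 0) ^ q + 2 * β * (0:ℝ) ^ (q/2) * (1 - 0) ^ (q/2) = 1 := by
      rw [Real.zero_rpow hqne, Real.zero_rpow hq2ne]
      norm_num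
    exact ⟨this.le, ⟨fun _ => Or.inl rfl, fun _ => this⟩⟩
  rcases eq_or_lt_of_le hy1 with rfl | hy1'
  · have : (1:ℝ) ^ q + (1 - 1) ^ q + 2 * β * (1:ℝ) ^ (q/2) * (1 - 1) ^ (q/2) = 1 := by
      rw [sub_self, Real.zero_rpow hqne, Real.zero_rpow hq2ne]
      norm_num
    exact ⟨this.le, ⟨fun _ => Or.inr rfl, fun _ => this⟩⟩
  -- interior case
  have hprod : 0 ≤ y ^ (q/2) * (1 - y) ^ (q/2) :=
    mul_nonneg (Real.rpow_nonneg hy0'.le _) (Real.rpow_nonneg (by linarith) _)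
  have hmax : y ^ q + (1 - y) ^ q + 2 * (q - 1) * y ^ (q/2) * (1 - y) ^ (q/2) < 1 := by
    rcases le_or_gt (1/2 : ℝ) y with h | h
    · exact interior_lt hq1 hq2 hy0' hy1' h
    · have := interior_lt hq1 hq2 (y := 1 - y) (by linarith) (by linarith) (by linarith)
      simp only [sub_sub_cancel] at this
      nlinarith [this]
  have hle : y ^ q + (1 - y) ^ q + 2 * β * y ^ (q/2) * (1 - y) ^ (q/2) < 1 := by
    nlinarith [hprod, hmax, hβ2]
  refine ⟨hle.le, ?_, ?_⟩
  · intro h; exfalso; linarith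
  · rintro (rfl | rfl) <;> [exact absurd rfl hy0'.ne'; exact absurd rfl hy1'.ne]
end

section
/- Let q ∈ [2,3) and β > 2^{q−1} − 1. Then the function h_β(y) = y^q + (1−y)^q + 2β y^{q/2}(1−y)^{q/2} on [0,1] attains its unique global maximum at y = 1/2 and h_β(1/2) = (1+β)/2^{q−1} > 1. -/
/-!
Write `P(y) = (y (1 - y)) ^ (q / 2)`, which is maximal exactly at `y = 1 / 2`, where it equals
`2 ^ (-q)`. With `β₀ = 2 ^ (q - 1) - 1` we have `h_β = h_β₀ + 2 (β - β₀) P`, so everything follows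
from `h_β₀ ≤ 1 = h_β₀ (1 / 2)` on `[0, 1]`. For `y ≤ 1 / 2` the substitution `t = y / (1 - y) ∈ (0, 1]`
turns this into `2 ^ q - 2 ≤ ((1 + t) ^ q - 1 - t ^ q) / t ^ (q / 2)`, and the right-hand side
decreases on `(0, 1]`: the sign of its derivative is that of `1 - t ^ q - (1 - t) (1 + t) ^ (q - 1)`,
which is `≤ 0` by two applications of `1 + a (1 - u⁻¹) ≤ u ^ a` (for `a = q - 2 ≥ 0`).
-/

open Real

lemma one_add_mul_one_sub_inv_le_rpow {u a : ℝ} (hu : 0 < u) (ha : 0 ≤ a) :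
    1 + a * (1 - u⁻¹) ≤ u ^ a :=
  calc 1 + a * (1 - u⁻¹) ≤ 1 + a * log u := by gcongr; exact one_sub_inv_le_log_of_pos hu
    _ ≤ exp (log u * a) := by linarith [add_one_le_exp (log u * a), mul_comm a (log u)]
    _ = u ^ a := (rpow_def_of_pos hu a).symm

lemma one_sub_rpow_le_mul_one_add_rpow {q t : ℝ} (hq : 2 ≤ q) (ht0 : 0 < t) (ht1 : t ≤ 1) :
    1 - t ^ q ≤ (1 - t) * (1 + t) ^ (q - 1) := by
  obtain ⟨a, ha, rfl⟩ : ∃ a, 0 ≤ a ∧ q = a + 2 := ⟨q - 2, by linarith, by ring⟩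
  have ht1' : 0 < 1 + t := by linarith
  have lower_t : t ^ 2 + a * t * (t - 1) ≤ t ^ (a + 2) :=
    calc t ^ 2 + a * t * (t - 1) = t ^ 2 * (1 + a * (1 - t⁻¹)) := by field_simp
      _ ≤ t ^ 2 * t ^ a := by gcongr; exact one_add_mul_one_sub_inv_le_rpow ht0 ha
      _ = t ^ (a + 2) := by rw [rpow_add ht0, rpow_two, mul_comm]
  have lower_one_add : (1 - t ^ 2) + a * t * (1 - t) ≤ (1 - t) * (1 + t) ^ (a + 2 - 1) :=
    calc (1 - t ^ 2) + a * t * (1 - t) = (1 - t ^ 2) * (1 + a * (1 - (1 + t)⁻¹)) := by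
          field_simp; ring
      _ ≤ (1 - t ^ 2) * (1 + t) ^ a := by
          gcongr
          · nlinarith
          · exact one_add_mul_one_sub_inv_le_rpow ht1' ha
      _ = (1 - t) * (1 + t) ^ (a + 2 - 1) := by
          rw [show a + 2 - 1 = a + 1 by ring, rpow_add ht1', rpow_one]; ring
  linarith

noncomputable def rpowDefect (q x : ℝ) : ℝ := ((1 + x) ^ q - 1 - x ^ q) * x ^ (-(q / 2))

lemma rpowDefect_one (q : ℝ) : rpowDefect q 1 = 2 ^ q - 2 := by
  norm_num [rpowDefect, sub_sub]

lemma hasDerivAt_rpowDefect {q x : ℝ} (hx : 0 < x) :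
    HasDerivAt (rpowDefect q)
      (q / 2 * x ^ (-(q / 2) - 1) * ((1 - x ^ q) - (1 - x) * (1 + x) ^ (q - 1))) x := by
  have hx1 : 0 < 1 + x := by linarith
  have hgap : HasDerivAt (fun x : ℝ => (1 + x) ^ q - 1 - x ^ q)
      (1 * q * (1 + x) ^ (q - 1) - q * x ^ (q - 1)) x :=
    ((((hasDerivAt_id x).const_add 1).rpow_const (Or.inl hx1.ne')).sub_const 1).sub
      (hasDerivAt_rpow_const (Or.inl hx.ne'))
  refine (hgap.mul (hasDerivAt_rpow_const (Or.inl hx.ne'))).congr_deriv ?_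
  rw [rpow_sub_one hx.ne', rpow_sub_one hx.ne', rpow_sub_one hx1.ne']
  field_simp
  ring

lemma antitoneOn_rpowDefect {q : ℝ} (hq : 2 ≤ q) : AntitoneOn (rpowDefect q) (Set.Ioc 0 1) := by
  refine antitoneOn_of_deriv_nonpos (convex_Ioc 0 1) ?_ ?_ ?_
  · exact fun x hx => (hasDerivAt_rpowDefect hx.1).continuousAt.continuousWithinAt
  · rw [interior_Ioc]
    exact fun x hx => (hasDerivAt_rpowDefect hx.1).differentiableAt.differentiableWithinAt
  · rw [interior_Ioc]
    intro x hx
    rw [(hasDerivAt_rpowDefect hx.1).deriv]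
    have := one_sub_rpow_le_mul_one_add_rpow hq hx.1 hx.2.le
    exact mul_nonpos_of_nonneg_of_nonpos
      (mul_nonneg (by linarith) (rpow_nonneg hx.1.le _)) (by linarith)

lemma two_rpow_sub_two_mul_rpow_half_le {q t : ℝ} (hq : 2 ≤ q) (ht0 : 0 < t) (ht1 : t ≤ 1) :
    (2 ^ q - 2) * t ^ (q / 2) ≤ (1 + t) ^ q - 1 - t ^ q := by
  have hanti := antitoneOn_rpowDefect hq ⟨ht0, ht1⟩ ⟨one_pos, le_rfl⟩ ht1
  rw [rpowDefect_one] at hanti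
  calc (2 ^ q - 2) * t ^ (q / 2) ≤ rpowDefect q t * t ^ (q / 2) := by gcongr
    _ = (1 + t) ^ q - 1 - t ^ q := by rw [rpowDefect, mul_assoc, ← rpow_add ht0]; simp

lemma rpow_add_one_sub_rpow_add_mul_le_one_of_le_half {q y : ℝ} (hq : 2 ≤ q) (hy0 : 0 < y)
    (hy : y ≤ 1 / 2) :
    y ^ q + (1 - y) ^ q + (2 ^ q - 2) * (y * (1 - y)) ^ (q / 2) ≤ 1 := by
  have hy1 : 0 < 1 - y := by linarith
  have key := two_rpow_sub_two_mul_rpow_half_le hq (div_pos hy0 hy1)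
    ((div_le_one hy1).2 (by linarith))
  have hscale := mul_le_mul_of_nonneg_right key (rpow_nonneg hy1.le q)
  have e1 : (1 + y / (1 - y)) ^ q * (1 - y) ^ q = 1 := by
    rw [← mul_rpow (by positivity) hy1.le, show (1 + y / (1 - y)) * (1 - y) = 1 by field_simp; ring,
      one_rpow]
  have e2 : (y / (1 - y)) ^ q * (1 - y) ^ q = y ^ q := by
    rw [← mul_rpow (by positivity) hy1.le, div_mul_cancel₀ y hy1.ne']
  have e3 : (y / (1 - y)) ^ (q / 2) * (1 - y) ^ q = (y * (1 - y)) ^ (q / 2) := by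
    rw [← add_halves q, rpow_add hy1, add_halves, ← mul_assoc, ← mul_rpow (by positivity) hy1.le,
      div_mul_cancel₀ y hy1.ne', ← mul_rpow hy0.le hy1.le]
  rw [mul_assoc, e3] at hscale
  linear_combination hscale + e1 - e2

lemma rpow_add_one_sub_rpow_add_mul_le_one {q y : ℝ} (hq : 2 ≤ q) (hy0 : 0 ≤ y) (hy1 : y ≤ 1) :
    y ^ q + (1 - y) ^ q + (2 ^ q - 2) * (y * (1 - y)) ^ (q / 2) ≤ 1 := by
  have hq0 : q ≠ 0 := by linarith
  rcases le_or_gt y (1 / 2) with hy | hy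
  · rcases hy0.eq_or_lt with rfl | hy0
    · simp [zero_rpow hq0, zero_rpow (div_ne_zero hq0 two_ne_zero)]
    · exact rpow_add_one_sub_rpow_add_mul_le_one_of_le_half hq hy0 hy
  · rcases hy1.eq_or_lt with rfl | hy1
    · simp [zero_rpow hq0, zero_rpow (div_ne_zero hq0 two_ne_zero)]
    · have := rpow_add_one_sub_rpow_add_mul_le_one_of_le_half hq (sub_pos.2 hy1) (by linarith)
      rw [sub_sub_cancel, mul_comm (1 - y)] at this
      linarith

lemma mul_one_sub_rpow_half_lt_inv_two_rpow {q y : ℝ} (hq : 0 < q) (hy0 : 0 ≤ y) (hy1 : y ≤ 1)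
    (hy : y ≠ 1 / 2) :
    (y * (1 - y)) ^ (q / 2) < (2 ^ q)⁻¹ := by
  have hlt : y * (1 - y) < (2 ^ (2 : ℝ))⁻¹ := by
    have : 0 < (y - 1 / 2) ^ 2 := by positivity [sub_ne_zero.2 hy]
    norm_num
    nlinarith
  calc (y * (1 - y)) ^ (q / 2) < ((2 ^ (2 : ℝ))⁻¹) ^ (q / 2) :=
        rpow_lt_rpow (mul_nonneg hy0 (by linarith)) hlt (by linarith)
    _ = (2 ^ q)⁻¹ := by
        rw [inv_rpow (by positivity), ← rpow_mul zero_le_two, mul_div_cancel₀ q two_ne_zero]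

theorem stmt_9_general (q β : ℝ) (hq1 : 2 ≤ q) (hβ : (2:ℝ) ^ (q-1) - 1 < β) :
    ((1:ℝ)/2) ^ q + (1 - 1/2 : ℝ) ^ q
        + 2 * β * ((1:ℝ)/2) ^ (q/2) * (1 - 1/2 : ℝ) ^ (q/2)
      = (1 + β) / (2:ℝ) ^ (q-1) ∧
    1 < (1 + β) / (2:ℝ) ^ (q-1) ∧
    ∀ y ∈ Set.Icc (0:ℝ) 1, y ≠ 1/2 →
      y ^ q + (1 - y) ^ q + 2 * β * y ^ (q/2) * (1 - y) ^ (q/2)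
        < (1 + β) / (2:ℝ) ^ (q-1) := by
  have hpow : (0 : ℝ) < 2 ^ q := by positivity
  have hvalue : (1 + β) / (2:ℝ) ^ (q - 1) = 1 + (2 * β - (2 ^ q - 2)) * (2 ^ q)⁻¹ := by
    rw [rpow_sub_one two_ne_zero]; field_simp; ring
  have hcoef : 0 < 2 * β - (2 ^ q - 2) := by
    rw [rpow_sub_one two_ne_zero] at hβ; linarith
  have hhalf : ((1:ℝ) / 2) ^ (q / 2) * (1 / 2) ^ (q / 2) = (2 ^ q)⁻¹ := by
    rw [← rpow_add (by norm_num), add_halves, div_rpow zero_le_one zero_le_two, one_rpow, one_div]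
  refine ⟨?_, ?_, ?_⟩
  · rw [hvalue, mul_assoc _ (_ ^ (q / 2)), show (1 - 1 / 2 : ℝ) = 1 / 2 by norm_num, hhalf,
      div_rpow zero_le_one zero_le_two, one_rpow]
    field_simp
    ring
  · rw [hvalue]
    linarith [mul_pos hcoef (inv_pos.2 hpow)]
  · rintro y ⟨hy0, hy1⟩ hy
    have hlt := mul_one_sub_rpow_half_lt_inv_two_rpow (q := q) (by linarith) hy0 hy1 hy
    rw [hvalue, mul_assoc _ (y ^ (q / 2)), ← mul_rpow hy0 (sub_nonneg.2 hy1)]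
    linarith [rpow_add_one_sub_rpow_add_mul_le_one hq1 hy0 hy1, mul_lt_mul_of_pos_left hlt hcoef]

theorem stmt_9 (q β : ℝ) (hq1 : 2 ≤ q) (hq2 : q < 3) (hβ : (2:ℝ) ^ (q-1) - 1 < β) :
    ((1:ℝ)/2) ^ q + (1 - 1/2 : ℝ) ^ q
        + 2 * β * ((1:ℝ)/2) ^ (q/2) * (1 - 1/2 : ℝ) ^ (q/2)
      = (1 + β) / (2:ℝ) ^ (q-1) ∧
    1 < (1 + β) / (2:ℝ) ^ (q-1) ∧
    ∀ y ∈ Set.Icc (0:ℝ) 1, y ≠ 1/2 →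
      y ^ q + (1 - y) ^ q + 2 * β * y ^ (q/2) * (1 - y) ^ (q/2)
        < (1 + β) / (2:ℝ) ^ (q-1) :=
  stmt_9_general q β hq1 hβ
end

section
/- Let q ∈ (2,3) and β = 2^{q−1} − 1. Then h_β(y) = y^q + (1−y)^q + 2β y^{q/2}(1−y)^{q/2} ≤ 1 on [0,1], and h_β(y) = 1 exactly for y ∈ {0, 1/2, 1}. -/
/-!
With `c = 2 ^ q - 2 = 2β`, the bound is the homogeneous inequality
`a^q + b^q + c (ab)^(q/2) ≤ (a+b)^q` at `a = y`, `b = 1 - y`. Dividing by `b^q` and writing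
`x = a/b ≥ 1`, it says `G x = (x+1)^q - x^q - 1 - c x^(q/2) ≥ 0`. Now `G 1 = G' 1 = 0`, and
`G'' > 0` on `[1, ∞)`: concavity of `t ↦ t^(q-2)` bounds `(x+1)^(q-2) - x^(q-2)` from below by
`(q-2)(x+1)^(q-3)`, and the remaining comparison of coefficients reduces to `(1-u) 2^u ≤ 1`
for `u = q - 2 ∈ [0,1]`. Hence `G > 0` on `(1, ∞)`: equality forces `a = b` or `ab = 0`.
-/

open Real Set

lemma two_rpow_sub_two_le {q : ℝ} (hq2 : 2 ≤ q) (hq3 : q ≤ 3) :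
    (2:ℝ) ^ q - 2 ≤ (q - 1) * 2 ^ (q - 1) := by
  have hw : (2:ℝ) ^ (q - 2) ≤ 1 + (q - 2) := by
    simpa [one_add_one_eq_two] using
      rpow_one_add_le_one_add_mul_self (s := 1) (by norm_num) (p := q - 2) (by linarith)
        (by linarith)
  have hq : (2:ℝ) ^ q = 4 * 2 ^ (q - 2) := by
    rw [rpow_sub two_pos, rpow_two]; ring
  rw [rpow_sub_one two_ne_zero, hq]
  nlinarith [rpow_pos_of_pos two_pos (q - 2)]

-- Bernoulli's inequality for `(x / (x + 1)) ^ p = (1 - (x + 1)⁻¹) ^ p`.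
lemma mul_add_one_rpow_sub_one_lt {p x : ℝ} (hp0 : 0 < p) (hp1 : p < 1) (hx : 0 < x) :
    p * (x + 1) ^ (p - 1) < (x + 1) ^ p - x ^ p := by
  have hx1 : 0 < x + 1 := by linarith
  have hbern := rpow_one_add_lt_one_add_mul_self (s := -(x + 1)⁻¹)
    (by rw [neg_le_neg_iff]; exact inv_le_one_of_one_le₀ (by linarith))
    (by simp [hx1.ne']) hp0 hp1
  have hsplit : 1 + -(x + 1)⁻¹ = x / (x + 1) := by field_simp; ring
  rw [hsplit, div_rpow hx.le hx1.le, div_lt_iff₀ (rpow_pos_of_pos hx1 p)] at hbern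
  rw [rpow_sub_one hx1.ne']
  have : (1 + p * -(x + 1)⁻¹) * (x + 1) ^ p = (x + 1) ^ p - p * ((x + 1) ^ p / (x + 1)) := by
    field_simp; ring
  linarith

lemma two_rpow_mul_rpow_le_add_one_rpow {q x : ℝ} (hq2 : 2 ≤ q) (hq3 : q ≤ 3) (hx : 1 ≤ x) :
    (2:ℝ) ^ (q - 3) * x ^ (q / 2 - 2) ≤ (x + 1) ^ (q - 3) := by
  have hx0 : 0 < x := by linarith
  calc (2:ℝ) ^ (q - 3) * x ^ (q / 2 - 2) ≤ 2 ^ (q - 3) * x ^ (q - 3) := by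
        gcongr (2:ℝ) ^ (q - 3) * ?_
        exact rpow_le_rpow_of_exponent_le hx (by linarith)
    _ = (2 * x) ^ (q - 3) := (mul_rpow zero_le_two hx0.le).symm
    _ ≤ (x + 1) ^ (q - 3) := rpow_le_rpow_of_nonpos (by linarith) (by linarith) (by linarith)

lemma gap_second_deriv_pos {q x : ℝ} (hq2 : 2 < q) (hq3 : q < 3) (hx : 1 ≤ x) :
    0 < q * (q - 1) * ((x + 1) ^ (q - 2) - x ^ (q - 2))
      - (2 ^ q - 2) * (q / 2) * (q / 2 - 1) * x ^ (q / 2 - 2) := by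
  have hdiff := mul_add_one_rpow_sub_one_lt (p := q - 2) (by linarith) (by linarith)
    (by linarith : 0 < x)
  rw [show q - 2 - 1 = q - 3 by ring] at hdiff
  have hcmp := two_rpow_mul_rpow_le_add_one_rpow hq2.le hq3.le hx
  have hc := two_rpow_sub_two_le hq2.le hq3.le
  have h2 : (2:ℝ) ^ (q - 1) = 4 * 2 ^ (q - 3) := by
    rw [show q - 1 = q - 3 + 2 by ring, rpow_add two_pos, rpow_two]; ring
  rw [h2] at hc
  have hB : 0 < x ^ (q / 2 - 2) := rpow_pos_of_pos (by linarith) _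
  have hqq : 0 < q * (q - 1) * (q - 2) :=
    mul_pos (mul_pos (by linarith) (by linarith)) (by linarith)
  nlinarith [mul_le_mul_of_nonneg_right hc hB.le, mul_le_mul_of_nonneg_left hcmp hqq.le,
    mul_lt_mul_of_pos_left hdiff (by nlinarith : 0 < q * (q - 1))]

lemma pos_of_hasDerivAt_pos {f f' : ℝ → ℝ} {a x : ℝ}
    (hf : ∀ t ∈ Ici a, HasDerivAt f (f' t) t) (hf' : ∀ t ∈ Ioi a, 0 < f' t) (ha : f a = 0)
    (hx : a < x) : 0 < f x := by
  have hmono : StrictMonoOn f (Ici a) :=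
    strictMonoOn_of_hasDerivWithinAt_pos (convex_Ici a)
      (fun t ht => (hf t ht).continuousAt.continuousWithinAt)
      (fun t ht => (hf t (interior_subset ht)).hasDerivWithinAt)
      (by simpa only [interior_Ici] using hf')
  simpa only [ha] using hmono self_mem_Ici hx.le hx

lemma hasDerivAt_add_one_rpow (p : ℝ) {t : ℝ} (ht : 0 < t) :
    HasDerivAt (fun s => (s + 1) ^ p) (p * (t + 1) ^ (p - 1)) t := by
  simpa using ((hasDerivAt_id t).add_const 1).rpow_const (p := p) (Or.inl (by simp; linarith))

lemma rpow_add_one_add_mul_rpow_half_lt_add_one_rpow {q x : ℝ} (hq2 : 2 < q) (hq3 : q < 3)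
    (hx : 1 < x) : x ^ q + 1 + (2 ^ q - 2) * x ^ (q / 2) < (x + 1) ^ q := by
  have hderiv_pos : ∀ t ∈ Ioi (1:ℝ), 0 < q * (t + 1) ^ (q - 1) - q * t ^ (q - 1)
      - (2 ^ q - 2) * (q / 2) * t ^ (q / 2 - 1) := by
    refine fun t ht => pos_of_hasDerivAt_pos (f := fun t => q * (t + 1) ^ (q - 1)
        - q * t ^ (q - 1) - (2 ^ q - 2) * (q / 2) * t ^ (q / 2 - 1)) (fun s hs => ?_)
      (fun s hs => gap_second_deriv_pos hq2 hq3 (le_of_lt hs)) ?_ ht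
    · have hs0 : 0 < s := zero_lt_one.trans_le hs
      have h := (((hasDerivAt_add_one_rpow (q - 1) hs0).const_mul q).sub
        ((hasDerivAt_rpow_const (p := q - 1) (Or.inl hs0.ne')).const_mul q)).sub
        ((hasDerivAt_rpow_const (p := q / 2 - 1) (Or.inl hs0.ne')).const_mul
          ((2 ^ q - 2) * (q / 2)))
      rw [show q - 1 - 1 = q - 2 by ring, show q / 2 - 1 - 1 = q / 2 - 2 by ring] at h
      exact h.congr_deriv (by ring)
    · norm_num [rpow_sub_one two_ne_zero]
      ring
  have h := pos_of_hasDerivAt_pos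
    (f := fun t => (t + 1) ^ q - t ^ q - 1 - (2 ^ q - 2) * t ^ (q / 2)) (fun s hs => ?_)
    hderiv_pos (by norm_num; ring) hx
  · linarith
  · have hs0 : 0 < s := zero_lt_one.trans_le hs
    exact ((((hasDerivAt_add_one_rpow q hs0).sub
        (hasDerivAt_rpow_const (p := q) (Or.inl hs0.ne'))).sub_const 1).sub
        ((hasDerivAt_rpow_const (p := q / 2) (Or.inl hs0.ne')).const_mul
          (2 ^ q - 2))).congr_deriv (by ring)

-- `h_β y = mixedPowerSum q y (1 - y)`, since `2β = 2 ^ q - 2`.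
noncomputable def mixedPowerSum (q a b : ℝ) : ℝ :=
  a ^ q + b ^ q + (2 ^ q - 2) * (a * b) ^ (q / 2)

lemma mixedPowerSum_comm (q a b : ℝ) : mixedPowerSum q a b = mixedPowerSum q b a := by
  rw [mixedPowerSum, mixedPowerSum, add_comm (a ^ q), mul_comm a]

lemma mul_self_rpow_half {a : ℝ} (ha : 0 ≤ a) (q : ℝ) : (a * a) ^ (q / 2) = a ^ q := by
  rw [← sq, ← rpow_natCast, ← rpow_mul ha]; push_cast; ring_nf

lemma mixedPowerSum_self {a : ℝ} (ha : 0 ≤ a) (q : ℝ) :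
    mixedPowerSum q a a = (a + a) ^ q := by
  rw [mixedPowerSum, mul_self_rpow_half ha, ← two_mul a, mul_rpow zero_le_two ha]; ring

lemma mixedPowerSum_zero_left {q : ℝ} (hq : 0 < q) (b : ℝ) :
    mixedPowerSum q 0 b = b ^ q := by
  simp [mixedPowerSum, zero_rpow hq.ne', zero_rpow (half_pos hq).ne']

lemma mixedPowerSum_lt_add_rpow_of_lt {q a b : ℝ} (hq2 : 2 < q) (hq3 : q < 3)
    (hb : 0 < b) (hba : b < a) : mixedPowerSum q a b < (a + b) ^ q := by
  obtain ⟨x, hx, rfl⟩ : ∃ x > 1, a = x * b :=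
    ⟨a / b, (one_lt_div hb).2 hba, (div_mul_cancel₀ _ hb.ne').symm⟩
  have hx0 : 0 ≤ x := by linarith
  calc mixedPowerSum q (x * b) b = b ^ q * (x ^ q + 1 + (2 ^ q - 2) * x ^ (q / 2)) := by
        rw [mixedPowerSum, mul_assoc, mul_rpow (x := x) hx0 (mul_self_nonneg b),
          mul_self_rpow_half hb.le, mul_rpow hx0 hb.le]
        ring
    _ < b ^ q * (x + 1) ^ q := mul_lt_mul_of_pos_left
        (rpow_add_one_add_mul_rpow_half_lt_add_one_rpow hq2 hq3 hx) (rpow_pos_of_pos hb q)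
    _ = (x * b + b) ^ q := by rw [← mul_rpow hb.le (by linarith)]; ring_nf

lemma mixedPowerSum_lt_add_rpow {q a b : ℝ} (hq2 : 2 < q) (hq3 : q < 3)
    (ha : 0 < a) (hb : 0 < b) (hab : a ≠ b) : mixedPowerSum q a b < (a + b) ^ q := by
  rcases hab.lt_or_gt with hab | hab
  · rw [mixedPowerSum_comm, add_comm]
    exact mixedPowerSum_lt_add_rpow_of_lt hq2 hq3 ha hab
  · exact mixedPowerSum_lt_add_rpow_of_lt hq2 hq3 hb hab

lemma mixedPowerSum_eq_add_rpow {q a b : ℝ} (hq : 0 < q) (ha : 0 ≤ a)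
    (h : a = 0 ∨ b = 0 ∨ a = b) : mixedPowerSum q a b = (a + b) ^ q := by
  rcases h with rfl | rfl | rfl
  · rw [zero_add, mixedPowerSum_zero_left hq]
  · rw [add_zero, mixedPowerSum_comm, mixedPowerSum_zero_left hq]
  · exact mixedPowerSum_self ha q

theorem mixedPowerSum_le_add_rpow {q a b : ℝ} (hq2 : 2 < q) (hq3 : q < 3)
    (ha : 0 ≤ a) (hb : 0 ≤ b) : mixedPowerSum q a b ≤ (a + b) ^ q := by
  by_cases h : a = 0 ∨ b = 0 ∨ a = b
  · exact (mixedPowerSum_eq_add_rpow (by linarith) ha h).le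
  · push Not at h
    exact (mixedPowerSum_lt_add_rpow hq2 hq3 (ha.lt_of_ne' h.1) (hb.lt_of_ne' h.2.1) h.2.2).le

theorem mixedPowerSum_eq_add_rpow_iff {q a b : ℝ} (hq2 : 2 < q) (hq3 : q < 3)
    (ha : 0 ≤ a) (hb : 0 ≤ b) :
    mixedPowerSum q a b = (a + b) ^ q ↔ a = 0 ∨ b = 0 ∨ a = b := by
  refine ⟨fun heq => ?_, mixedPowerSum_eq_add_rpow (by linarith) ha⟩
  by_contra! h
  exact (mixedPowerSum_lt_add_rpow hq2 hq3 (ha.lt_of_ne' h.1) (hb.lt_of_ne' h.2.1) h.2.2).ne heq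

theorem stmt_11 (q : ℝ) (hq1 : 2 < q) (hq2 : q < 3) :
    ∀ y ∈ Set.Icc (0:ℝ) 1,
      y ^ q + (1 - y) ^ q
          + 2 * ((2:ℝ) ^ (q-1) - 1) * y ^ (q/2) * (1 - y) ^ (q/2) ≤ 1 ∧
      (y ^ q + (1 - y) ^ q
          + 2 * ((2:ℝ) ^ (q-1) - 1) * y ^ (q/2) * (1 - y) ^ (q/2) = 1
        ↔ y = 0 ∨ y = 1/2 ∨ y = 1) := by
  rintro y ⟨hy0, hy1⟩
  have h1y : 0 ≤ 1 - y := by linarith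
  have hform : y ^ q + (1 - y) ^ q + 2 * ((2:ℝ) ^ (q-1) - 1) * y ^ (q/2) * (1 - y) ^ (q/2)
      = mixedPowerSum q y (1 - y) := by
    rw [mixedPowerSum, mul_rpow hy0 h1y, rpow_sub_one two_ne_zero]; ring
  have hsum : (y + (1 - y)) ^ q = 1 := by simp
  have hle := mixedPowerSum_le_add_rpow hq1 hq2 hy0 h1y
  have hiff := mixedPowerSum_eq_add_rpow_iff hq1 hq2 hy0 h1y
  rw [hsum] at hle hiff
  rw [hform, hiff]
  refine ⟨hle, ?_⟩
  grind
end

section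
/- Let q ∈ (2,3) and 0 < β < q−1. Then the function r_β(t) = 2(q−1)t^{q/2} − βqt + β(q−2) is strictly positive on (0,1). -/
open Real

theorem stmt_13 (q β : ℝ) (hq1 : 2 < q) (hq2 : q < 3) (hβ1 : 0 < β) (hβ2 : β < q - 1) :
    ∀ t ∈ Set.Ioo (0:ℝ) 1,
      0 < 2 * (q - 1) * t ^ (q/2) - β * q * t + β * (q - 2) := by
  intro t ht
  obtain ⟨ht0, ht1⟩ := ht
  have hq1' : (0:ℝ) < q - 1 := by linarith
  have hq2' : (0:ℝ) < q - 2 := by linarith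
  have hb0 : 0 < β / (q - 1) := div_pos hβ1 hq1'
  have hb1 : β / (q - 1) < 1 := (div_lt_one hq1').2 hβ2
  set a : ℝ := (β / (q - 1)) ^ (2 / (q - 2)) with ha
  have ha0 : 0 < a := rpow_pos_of_pos hb0 _
  have ha1 : a < 1 := rpow_lt_one hb0.le hb1 (by positivity)
  have hkey : a ^ ((q - 2) / 2) = β / (q - 1) := by
    rw [ha, ← Real.rpow_mul hb0.le,
      show (2 / (q - 2)) * ((q - 2) / 2) = 1 by field_simp, rpow_one]
  have hA : a ^ (q / 2) = β / (q - 1) * a := by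
    rw [show q / 2 = (q - 2) / 2 + 1 by ring, rpow_add_one ha0.ne', hkey]
  -- Bernoulli's inequality gives the tangent-line bound at `a`.
  have hbern : 1 + (q / 2) * (t / a - 1) ≤ (t / a) ^ (q / 2) := by
    have := one_add_mul_self_le_rpow_one_add
      (s := t / a - 1) (by nlinarith [div_pos ht0 ha0]) (p := q / 2) (by linarith)
    simpa using this
  have hdiv : (t / a) ^ (q / 2) = t ^ (q / 2) / a ^ (q / 2) :=
    Real.div_rpow ht0.le ha0.le _
  rw [hdiv] at hbern
  have hAp : 0 < a ^ (q / 2) := rpow_pos_of_pos ha0 _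
  have htangent : a ^ (q / 2) * (1 + (q / 2) * (t / a - 1)) ≤ t ^ (q / 2) := by
    rw [← le_div_iff₀' hAp]
    linarith [hbern]
  rw [hA] at htangent
  have hta : β / (q - 1) * a * (t / a) = β / (q - 1) * t := by
    field_simp
  have h2 : β / (q - 1) * a * (1 + q / 2 * (t / a - 1))
      = β / (q - 1) * a + q / 2 * (β / (q - 1) * a * (t / a) - β / (q - 1) * a) := by
    ring
  rw [hta] at h2
  rw [h2] at htangent
  have h3 := mul_le_mul_of_nonneg_left htangent (by linarith : (0:ℝ) ≤ 2 * (q - 1))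
  have h4 : 2 * (q - 1) * (β / (q - 1) * a + q / 2 * (β / (q - 1) * t - β / (q - 1) * a))
      = 2 * β * a + q * (β * t - β * a) := by
    field_simp
  rw [h4] at h3
  have hpos : 0 < 2 * β * a - q * β * a + β * (q - 2) := by
    nlinarith [mul_pos (mul_pos hβ1 hq2') (sub_pos.2 ha1)]
  nlinarith [h3, hpos]
end
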